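/- arXiv:2603.23672 — 2 statements merged into one kernel-verified Lean document; each statement's English description precedes it below -/
import Mathlib

section
/- Let σ ≠ 0 and define the quadratic logarithmic intensity profile f(u) = −u²/(2σ²). Let x : ℝ → ℝ be twice continuously differentiable with |x'(s)| ≤ v_max and |x''(s)| ≤ a_max for all s, let f_x, Z, C > 0 be constants, set μ(s) = −(f_x/Z)·x(s), and let K ⊂ ℤ² be a finite set of N_u·N_v pixels with Σ_{(u,v)∈K} u = 0 and |u| ≤ N_u/2 for every (u,v) ∈ K. Suppose |f'(w)| ≤ F₁ and |f''(w)| ≤ F₂ for all w in an interval containing u + μ(s) for every (u,v) ∈ K and every s ∈ [t, t+Δt]. Define N_net = (1/C)·Σ_{(u,v)∈K} [f(u + μ(t+Δt)) − f(u + μ(t))] and M_Quadratic = −(N_u N_v f_x²/(C Z² σ²))·x(t)·x'(t). Then for every Δt > 0, |N_net − M_Quadratic·Δt| ≤ L_time·Δt², where L_time = (N_u N_v/(2C))·[F₂·(f_x·v_max/Z)² + F₁·(f_x·a_max/Z)]; that is, the spatial error term vanishes entirely and the net event count estimates the position–velocity product x(t)·x'(t) up to a purely temporal error of order Δt². -/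
open Real Finset

/-!
Each pixel contributes `s ↦ f (u + μ s)`, whose second derivative `f'' μ' ^ 2 + f' μ''` is
bounded on `[t, t + Δt]` by `F₂ (f_x v_max / Z) ^ 2 + F₁ (f_x a_max / Z)`; the Lagrange remainder
then bounds its first-order Taylor error by half of this times `Δt ^ 2`. For the quadratic profile
`f' w = -w / σ ^ 2`, so the first-order terms add up to `-(#K μ t / σ ^ 2) μ' t`: the pixel
coordinates drop out because the kernel is centred, and what remains is `C M_Quadratic`.
-/

theorem abs_sub_sub_deriv_mul_le {g : ℝ → ℝ} (hg : ContDiff ℝ 2 g) {a b B : ℝ} (hab : a < b)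
    (hB : ∀ y ∈ Set.Icc a b, |deriv (deriv g) y| ≤ B) :
    |g b - g a - deriv g a * (b - a)| ≤ B * (b - a) ^ 2 / 2 := by
  obtain ⟨c, hc, hc_eq⟩ :=
    taylor_mean_remainder_lagrange_iteratedDeriv (n := 1) hab.ne hg.contDiffOn
  rw [Set.uIoo_of_le hab.le] at hc
  rw [Set.uIcc_of_le hab.le] at hc_eq
  have htaylor : taylorWithinEval g 1 (Set.Icc a b) a b = g a + deriv g a * (b - a) := by
    rw [taylorWithinEval_succ, taylor_within_zero_eval,
      iteratedDerivWithin_eq_iteratedDeriv (uniqueDiffOn_Icc hab)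
        (hg.of_le (by norm_num)).contDiffAt (Set.left_mem_Icc.mpr hab.le), iteratedDeriv_one]
    simp only [smul_eq_mul]
    ring
  rw [htaylor, iteratedDeriv_succ, iteratedDeriv_one, ← sub_sub] at hc_eq
  rw [hc_eq, abs_div, abs_mul, abs_pow, sq_abs]
  norm_num
  gcongr
  exact hB c (Set.Ioo_subset_Icc_self hc)

theorem deriv_deriv_comp {f g : ℝ → ℝ} (hf : ContDiff ℝ 2 f) (hg : ContDiff ℝ 2 g) (s : ℝ) :
    deriv (deriv (f ∘ g)) s =
      deriv (deriv f) (g s) * deriv g s ^ 2 + deriv f (g s) * deriv (deriv g) s := by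
  have hg₁ := hg.differentiable two_ne_zero
  have hchain : deriv (f ∘ g) = fun s => deriv f (g s) * deriv g s :=
    funext fun s => deriv_comp s (hf.differentiable two_ne_zero _) (hg₁ s)
  have hchain_deriv : HasDerivAt (fun s => deriv f (g s) * deriv g s)
      (deriv (deriv f) (g s) * deriv g s * deriv g s + deriv f (g s) * deriv (deriv g) s) s :=
    ((hf.differentiable_deriv_two _).hasDerivAt.comp s (hg₁ s).hasDerivAt).mul
      (hg.differentiable_deriv_two s).hasDerivAt
  rw [hchain, hchain_deriv.deriv]
  ring

theorem abs_comp_sub_sub_deriv_mul_le {f g : ℝ → ℝ} (hf : ContDiff ℝ 2 f) (hg : ContDiff ℝ 2 g)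
    {I : Set ℝ} {a b F₁ F₂ V A : ℝ} (hab : a < b) (hmem : ∀ s ∈ Set.Icc a b, g s ∈ I)
    (hF₁ : ∀ w ∈ I, |deriv f w| ≤ F₁) (hF₂ : ∀ w ∈ I, |deriv (deriv f) w| ≤ F₂)
    (hV : ∀ s ∈ Set.Icc a b, |deriv g s| ≤ V) (hA : ∀ s ∈ Set.Icc a b, |deriv (deriv g) s| ≤ A) :
    |f (g b) - f (g a) - deriv f (g a) * deriv g a * (b - a)| ≤
      (F₂ * V ^ 2 + F₁ * A) * (b - a) ^ 2 / 2 := by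
  have hbound : ∀ s ∈ Set.Icc a b, |deriv (deriv (f ∘ g)) s| ≤ F₂ * V ^ 2 + F₁ * A := by
    intro s hs
    have hF₁s := hF₁ _ (hmem s hs)
    have hF₂s := hF₂ _ (hmem s hs)
    rw [deriv_deriv_comp hf hg s]
    refine (abs_add_le _ _).trans (add_le_add ?_ ?_) <;> rw [abs_mul]
    · rw [abs_pow]
      exact mul_le_mul hF₂s (pow_le_pow_left₀ (abs_nonneg _) (hV s hs) 2) (by positivity)
        ((abs_nonneg _).trans hF₂s)
    · exact mul_le_mul hF₁s (hA s hs) (abs_nonneg _) ((abs_nonneg _).trans hF₁s)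
  have h := abs_sub_sub_deriv_mul_le (hf.comp hg) hab hbound
  rwa [deriv_comp a (hf.differentiable two_ne_zero _) (hg.differentiable two_ne_zero a)] at h

theorem abs_sum_sub_sub_sum_deriv_mul_le {ι : Type*} (K : Finset ι) (u : ι → ℝ) {f μ : ℝ → ℝ}
    (hf : ContDiff ℝ 2 f) (hμ : ContDiff ℝ 2 μ) {I : Set ℝ} {a b F₁ F₂ V A : ℝ} (hab : a < b)
    (hmem : ∀ i ∈ K, ∀ s ∈ Set.Icc a b, u i + μ s ∈ I)
    (hF₁ : ∀ w ∈ I, |deriv f w| ≤ F₁) (hF₂ : ∀ w ∈ I, |deriv (deriv f) w| ≤ F₂)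
    (hV : ∀ s ∈ Set.Icc a b, |deriv μ s| ≤ V) (hA : ∀ s ∈ Set.Icc a b, |deriv (deriv μ) s| ≤ A) :
    |∑ i ∈ K, (f (u i + μ b) - f (u i + μ a)) -
        (∑ i ∈ K, deriv f (u i + μ a)) * deriv μ a * (b - a)| ≤
      K.card * ((F₂ * V ^ 2 + F₁ * A) * (b - a) ^ 2 / 2) := by
  have hpixel : ∀ i ∈ K, |f (u i + μ b) - f (u i + μ a) - deriv f (u i + μ a) * deriv μ a * (b - a)|
      ≤ (F₂ * V ^ 2 + F₁ * A) * (b - a) ^ 2 / 2 := by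
    intro i hi
    have h := abs_comp_sub_sub_deriv_mul_le (g := (u i + μ ·)) hf (contDiff_const.add hμ) hab
      (hmem i hi) hF₁ hF₂ (V := V) (A := A)
    simp only [deriv_const_add'] at h
    exact h hV hA
  rw [sum_mul, sum_mul, ← sum_sub_distrib, ← nsmul_eq_mul]
  exact (abs_sum_le_sum_abs _ _).trans (sum_le_card_nsmul _ _ _ hpixel)

theorem deriv_neg_sq_div_two_mul (c : ℝ) :
    deriv (fun w : ℝ => -(w ^ 2 / (2 * c))) = fun w => -(w / c) := by
  funext w
  have h : HasDerivAt (fun w : ℝ => -(w ^ 2 / (2 * c))) (-((2 : ℕ) * w ^ (2 - 1) / (2 * c))) w :=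
    ((hasDerivAt_pow 2 w).div_const (2 * c)).neg
  rw [h.deriv]
  field_simp
  ring

theorem sum_deriv_neg_sq_div_two_mul {ι : Type*} (c : ℝ) (K : Finset ι) (u : ι → ℝ)
    (hu : ∑ i ∈ K, u i = 0) (m : ℝ) :
    ∑ i ∈ K, deriv (fun w : ℝ => -(w ^ 2 / (2 * c))) (u i + m) = -(K.card * m / c) := by
  rw [deriv_neg_sq_div_two_mul, sum_neg_distrib, ← sum_div, sum_add_distrib, hu, sum_const,
    nsmul_eq_mul, zero_add]

theorem net_event_count_quadratic_profile_general
    (σ : ℝ)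
    (f : ℝ → ℝ) (hf : ∀ u : ℝ, f u = -(u ^ 2 / (2 * σ ^ 2)))
    (x : ℝ → ℝ) (hx : ContDiff ℝ 2 x)
    (v_max a_max : ℝ)
    (hv : ∀ s : ℝ, |deriv x s| ≤ v_max)
    (ha : ∀ s : ℝ, |deriv (deriv x) s| ≤ a_max)
    (f_x Z C : ℝ) (hfx : 0 < f_x) (hZ : 0 < Z) (hC : 0 < C)
    (μ : ℝ → ℝ) (hμ : ∀ s : ℝ, μ s = -(f_x / Z) * x s)
    (N_u N_v : ℕ) (K : Finset (ℤ × ℤ)) (hcard : K.card = N_u * N_v)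
    (hsum : ∑ p ∈ K, (p.1 : ℝ) = 0)
    (t Δt : ℝ) (hΔt : 0 < Δt)
    (I : Set ℝ)
    (hmem : ∀ p ∈ K, ∀ s ∈ Set.Icc t (t + Δt), ((p.1 : ℝ) + μ s) ∈ I)
    (F₁ F₂ : ℝ)
    (hF₁ : ∀ w ∈ I, |deriv f w| ≤ F₁)
    (hF₂ : ∀ w ∈ I, |deriv (deriv f) w| ≤ F₂)
    (N_net M_Quadratic L_time : ℝ)
    (hN : N_net = (1 / C) * ∑ p ∈ K, (f ((p.1 : ℝ) + μ (t + Δt)) - f ((p.1 : ℝ) + μ t)))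
    (hM : M_Quadratic = -((N_u : ℝ) * (N_v : ℝ) * f_x ^ 2 / (C * Z ^ 2 * σ ^ 2)) *
      x t * deriv x t)
    (hLtime : L_time = ((N_u : ℝ) * (N_v : ℝ) / (2 * C)) *
      (F₂ * (f_x * v_max / Z) ^ 2 + F₁ * (f_x * a_max / Z))) :
    |N_net - M_Quadratic * Δt| ≤ L_time * Δt ^ 2 := by
  have hfun : f = fun u => -(u ^ 2 / (2 * σ ^ 2)) := funext hf
  have hμfun : μ = fun s => -(f_x / Z) * x s := funext hμ
  have hμ₁ : deriv μ = fun s => -(f_x / Z) * deriv x s := by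
    rw [hμfun]; exact deriv_const_mul_field' _
  have hμ₂ : deriv (deriv μ) = fun s => -(f_x / Z) * deriv (deriv x) s := by
    rw [hμ₁]; exact deriv_const_mul_field' _
  have hscale : ∀ w M, |w| ≤ M → |-(f_x / Z) * w| ≤ f_x * M / Z := fun w M hw => by
    rw [abs_mul, abs_neg, abs_of_pos (by positivity), mul_div_right_comm]
    exact mul_le_mul_of_nonneg_left hw (by positivity)
  have hbound := abs_sum_sub_sub_sum_deriv_mul_le K (fun p => (p.1 : ℝ)) (by rw [hfun]; fun_prop)
    (by rw [hμfun]; exact contDiff_const.mul hx) (lt_add_of_pos_right t hΔt) hmem hF₁ hF₂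
    (fun s _ => by rw [hμ₁]; exact hscale _ _ (hv s))
    (fun s _ => by rw [hμ₂]; exact hscale _ _ (ha s))
  have hlinear : (∑ p ∈ K, deriv f (p.1 + μ t)) * deriv μ t = C * M_Quadratic := by
    rw [hfun, sum_deriv_neg_sq_div_two_mul _ K _ hsum, hμ₁, hμ, hM, hcard]
    push_cast
    field_simp
  rw [hlinear, hcard, add_sub_cancel_left] at hbound
  set S := ∑ p ∈ K, (f (p.1 + μ (t + Δt)) - f (p.1 + μ t))
  rw [hN, hLtime, show 1 / C * S - M_Quadratic * Δt = (S - C * M_Quadratic * Δt) / C by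
    field_simp, abs_div, abs_of_pos hC, div_le_iff₀ hC]
  refine hbound.trans_eq ?_
  push_cast
  field_simp

/-- **Example 1 (Quadratic profile).** For the quadratic logarithmic intensity profile
`f u = -u ^ 2 / (2 σ ^ 2)`, the net event count estimates the position–velocity product
`x t * x' t` with a purely temporal error of order `Δt ^ 2` (the spatial error vanishes). -/
theorem net_event_count_quadratic_profile
    (σ : ℝ) (hσ : σ ≠ 0)
    (f : ℝ → ℝ) (hf : ∀ u : ℝ, f u = -(u ^ 2 / (2 * σ ^ 2)))
    (x : ℝ → ℝ) (hx : ContDiff ℝ 2 x)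
    (v_max a_max : ℝ)
    (hv : ∀ s : ℝ, |deriv x s| ≤ v_max)
    (ha : ∀ s : ℝ, |deriv (deriv x) s| ≤ a_max)
    (f_x Z C : ℝ) (hfx : 0 < f_x) (hZ : 0 < Z) (hC : 0 < C)
    (μ : ℝ → ℝ) (hμ : ∀ s : ℝ, μ s = -(f_x / Z) * x s)
    (N_u N_v : ℕ) (K : Finset (ℤ × ℤ)) (hcard : K.card = N_u * N_v)
    (hsum : ∑ p ∈ K, (p.1 : ℝ) = 0)
    (hpix : ∀ p ∈ K, |(p.1 : ℝ)| ≤ (N_u : ℝ) / 2)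
    (t Δt : ℝ) (hΔt : 0 < Δt)
    (I : Set ℝ) (hI : Convex ℝ I)
    (hmem : ∀ p ∈ K, ∀ s ∈ Set.Icc t (t + Δt), ((p.1 : ℝ) + μ s) ∈ I)
    (F₁ F₂ : ℝ)
    (hF₁ : ∀ w ∈ I, |deriv f w| ≤ F₁)
    (hF₂ : ∀ w ∈ I, |deriv (deriv f) w| ≤ F₂)
    (N_net M_Quadratic L_time : ℝ)
    (hN : N_net = (1 / C) * ∑ p ∈ K, (f ((p.1 : ℝ) + μ (t + Δt)) - f ((p.1 : ℝ) + μ t)))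
    (hM : M_Quadratic = -((N_u : ℝ) * (N_v : ℝ) * f_x ^ 2 / (C * Z ^ 2 * σ ^ 2)) *
      x t * deriv x t)
    (hLtime : L_time = ((N_u : ℝ) * (N_v : ℝ) / (2 * C)) *
      (F₂ * (f_x * v_max / Z) ^ 2 + F₁ * (f_x * a_max / Z))) :
    |N_net - M_Quadratic * Δt| ≤ L_time * Δt ^ 2 :=
  net_event_count_quadratic_profile_general σ f hf x hx v_max a_max hv ha f_x Z C hfx hZ hC μ hμ N_u
    N_v K hcard hsum t Δt hΔt I hmem F₁ F₂ hF₁ hF₂ N_net M_Quadratic L_time hN hM hLtime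
end

section
/- Let p₁ > 0, ω > 0, set η = η† = (1/p₁²)·(1 + √(1 + 4·p₁²/ω²)) and δ† = (√(ω² + 4·p₁²) − ω)/(2·ω), and suppose 0 < δ ≤ δ†. Let q(t) = λ_min(Q(t)) denote the smallest eigenvalue of Q(t). Then q is continuous, (π/ω)-periodic, nonnegative, and not identically zero on [0, π/ω]; consequently μ = ∫₀^{π/ω} q(s) ds > 0. -/
open Real Matrix

/-!
Writing `Q(t)` out entrywise, with `r = √(1 + 4p₁²/ω²)` (so `η† = (1 + r)/p₁²` and
`δ† = (r - 1)/2`), its determinant factors as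
`δω²cos²(ωt)/(4p₁⁴) · (4p₁²r - δ(2p₁ sin ωt - ω(1 + r) cos ωt)²)`.
On the unit circle the squared term is at most `2ω²r(1 + r)` (Cauchy–Schwarz), and
`δ ≤ (r - 1)/2` turns this into `det Q(t) ≥ 0`, strictly at `t = 0`; the same condition on `δ`
keeps the trace positive. For a symmetric `2 × 2` matrix the smallest eigenvalue is
`(tr - √(tr² - 4 det))/2`, so `q` is continuous, nonnegative and positive at `0`, hence has
positive integral; periodicity is inherited from `A`.
-/

/-- The smaller root of `x² - tr M x + det M`; for symmetric `M` this is the smallest eigenvalue. -/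
noncomputable def minEigenvalueFinTwo (M : Matrix (Fin 2) (Fin 2) ℝ) : ℝ :=
  (M.trace - √(M.trace ^ 2 - 4 * M.det)) / 2

section MinEigenvalueFinTwo

variable {M : Matrix (Fin 2) (Fin 2) ℝ}

theorem spectrum_eq_of_isSymm_fin_two (hM : M.IsSymm) :
    spectrum ℝ M = {minEigenvalueFinTwo M, (M.trace + √(M.trace ^ 2 - 4 * M.det)) / 2} := by
  have hdiscr : 0 ≤ M.trace ^ 2 - 4 * M.det := by
    rw [trace_fin_two, det_fin_two, hM.apply 0 1]
    nlinarith [sq_nonneg (M 0 0 - M 1 1), sq_nonneg (M 0 1)]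
  have hsq := sq_sqrt hdiscr
  ext x
  rw [spectrum.mem_iff, isUnit_iff_isUnit_det, isUnit_iff_ne_zero, not_not]
  have hchar : (algebraMap ℝ _ x - M).det =
      (x - minEigenvalueFinTwo M) * (x - (M.trace + √(M.trace ^ 2 - 4 * M.det)) / 2) := by
    rw [algebraMap_eq_diagonal, det_fin_two, minEigenvalueFinTwo]
    simp only [Matrix.sub_apply, diagonal_apply_eq, diagonal_apply_ne, Pi.algebraMap_apply,
      Algebra.algebraMap_self, RingHom.id_apply, ne_eq, zero_ne_one, one_ne_zero,
      not_false_eq_true, zero_sub, mul_neg, neg_mul, neg_neg]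
    linear_combination (1 / 4 : ℝ) * hsq + x * trace_fin_two M - det_fin_two M
  rw [hchar, mul_eq_zero, sub_eq_zero, sub_eq_zero, Set.mem_insert_iff, Set.mem_singleton_iff]

theorem sInf_spectrum_of_isSymm_fin_two (hM : M.IsSymm) :
    sInf (spectrum ℝ M) = minEigenvalueFinTwo M := by
  rw [spectrum_eq_of_isSymm_fin_two hM, csInf_pair, inf_eq_left, minEigenvalueFinTwo]
  linarith [sqrt_nonneg (M.trace ^ 2 - 4 * M.det)]

theorem minEigenvalueFinTwo_nonneg (htr : 0 ≤ M.trace) (hdet : 0 ≤ M.det) :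
    0 ≤ minEigenvalueFinTwo M := by
  rw [minEigenvalueFinTwo, sub_div, sub_nonneg, div_le_div_iff_of_pos_right two_pos,
    sqrt_le_left htr]
  linarith

theorem minEigenvalueFinTwo_pos (htr : 0 < M.trace) (hdet : 0 < M.det) :
    0 < minEigenvalueFinTwo M := by
  rw [minEigenvalueFinTwo, sub_div, sub_pos, div_lt_div_iff_of_pos_right two_pos, sqrt_lt' htr]
  linarith

theorem continuous_minEigenvalueFinTwo : Continuous minEigenvalueFinTwo := by
  unfold minEigenvalueFinTwo
  fun_prop

end MinEigenvalueFinTwo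

theorem isSymm_smul_mul_add_transpose_mul {n α : Type*} [Fintype n] [CommSemiring α]
    {P : Matrix n n α} (hP : P.IsSymm) (c : α) (A : Matrix n n α) :
    (c • (P * A + Aᵀ * P)).IsSymm := by
  rw [Matrix.IsSymm, transpose_smul, transpose_add, transpose_mul, transpose_mul, hP.eq,
    transpose_transpose, add_comm]

theorem sqrt_sq_add_eq_mul_sqrt {ω : ℝ} (hω : 0 < ω) (x : ℝ) :
    √(ω ^ 2 + x) = ω * √(1 + x / ω ^ 2) := by
  rw [← sqrt_sq hω.le, ← sqrt_mul (sq_nonneg _), sqrt_sq hω.le, mul_add, mul_one,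
    mul_div_cancel₀ _ (by positivity)]

noncomputable section Lyapunov

variable (p ω δ η : ℝ)

def closedLoopMatrix (t : ℝ) : Matrix (Fin 2) (Fin 2) ℝ :=
  !![0, 1; -δ * ω ^ 2 * (cos (ω * t)) ^ 2, -p - δ * ω * sin (2 * ω * t)]

def lyapunovMatrix : Matrix (Fin 2) (Fin 2) ℝ := !![1, 1 / p; 1 / p, η]

def lyapunovQ (t : ℝ) : Matrix (Fin 2) (Fin 2) ℝ :=
  -((1 : ℝ) / 2) • (lyapunovMatrix p η * closedLoopMatrix p ω δ t +
    (closedLoopMatrix p ω δ t)ᵀ * lyapunovMatrix p η)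

variable {p ω δ η}

theorem isSymm_lyapunovQ (t : ℝ) : (lyapunovQ p ω δ η t).IsSymm :=
  isSymm_smul_mul_add_transpose_mul
    (IsSymm.ext fun i j => by fin_cases i <;> fin_cases j <;> rfl) _ _

theorem continuous_lyapunovQ : Continuous (lyapunovQ p ω δ η) := by
  unfold lyapunovQ closedLoopMatrix
  fun_prop

theorem closedLoopMatrix_periodic (hω : ω ≠ 0) :
    Function.Periodic (closedLoopMatrix p ω δ) (π / ω) := by
  intro t
  have hcos : cos (ω * (t + π / ω)) ^ 2 = cos (ω * t) ^ 2 := by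
    rw [mul_add, mul_div_cancel₀ _ hω, cos_add_pi, neg_sq]
  have hsin : sin (2 * ω * (t + π / ω)) = sin (2 * ω * t) := by
    rw [mul_add, mul_assoc 2 ω (π / ω), mul_div_cancel₀ _ hω, sin_add_two_pi]
  simp only [closedLoopMatrix, hcos, hsin]

theorem lyapunovQ_periodic (hω : ω ≠ 0) : Function.Periodic (lyapunovQ p ω δ η) (π / ω) :=
  fun t => by simp only [lyapunovQ, closedLoopMatrix_periodic hω t]

theorem lyapunovQ_eq (hp : p ≠ 0) (t : ℝ) :
    lyapunovQ p ω δ η t =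
      !![δ * ω ^ 2 * cos (ω * t) ^ 2 / p,
          δ * ω * sin (2 * ω * t) / (2 * p) + η * δ * ω ^ 2 * cos (ω * t) ^ 2 / 2;
        δ * ω * sin (2 * ω * t) / (2 * p) + η * δ * ω ^ 2 * cos (ω * t) ^ 2 / 2,
          η * p - 1 / p + η * δ * ω * sin (2 * ω * t)] := by
  ext i j
  fin_cases i <;> fin_cases j <;>
    simp [lyapunovQ, lyapunovMatrix, closedLoopMatrix, mul_apply, Fin.sum_univ_two] <;>
    field_simp <;> ring

theorem trace_lyapunovQ (hp : p ≠ 0) (r t : ℝ) :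
    (lyapunovQ p ω δ ((1 + r) / p ^ 2) t).trace =
      δ * ω ^ 2 * cos (ω * t) ^ 2 / p +
        (p * r + 2 * (1 + r) * δ * ω * sin (ω * t) * cos (ω * t)) / p ^ 2 := by
  rw [lyapunovQ_eq hp, trace_fin_two_of, mul_assoc 2 ω t, sin_two_mul]
  field_simp
  ring

theorem det_lyapunovQ (hp : p ≠ 0) (r t : ℝ) :
    (lyapunovQ p ω δ ((1 + r) / p ^ 2) t).det =
      δ * ω ^ 2 * cos (ω * t) ^ 2 / (4 * p ^ 4) *
        (4 * p ^ 2 * r - δ * (2 * p * sin (ω * t) - ω * (1 + r) * cos (ω * t)) ^ 2) := by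
  rw [lyapunovQ_eq hp, det_fin_two_of, mul_assoc 2 ω t, sin_two_mul]
  field_simp
  ring

variable {r : ℝ}

/-- `2ω²r(1 + r) = 4p² + ω²(1 + r)²` is the maximum of `(2p s - ω(1 + r) c)²` on the unit circle. -/
theorem delta_mul_max_le (hr : 1 < r) (hrel : ω ^ 2 * r ^ 2 = ω ^ 2 + 4 * p ^ 2)
    (hδr : 2 * δ ≤ r - 1) : δ * (2 * ω ^ 2 * r * (1 + r)) ≤ 4 * p ^ 2 * r := by
  have hpos : 0 ≤ ω ^ 2 * r * (1 + r) := by positivity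
  nlinarith [mul_le_mul_of_nonneg_right hδr hpos]

theorem trace_lyapunovQ_pos (hp : 0 < p) (hω : 0 < ω) (hδ : 0 ≤ δ) (hr : 1 < r)
    (hrel : ω ^ 2 * r ^ 2 = ω ^ 2 + 4 * p ^ 2) (hδr : 2 * δ ≤ r - 1) (t : ℝ) :
    0 < (lyapunovQ p ω δ ((1 + r) / p ^ 2) t).trace := by
  set s := sin (ω * t)
  set c := cos (ω * t)
  have h2p : 2 * p < ω * r := lt_of_pow_lt_pow_left₀ 2 (by positivity) (by nlinarith)
  have hgain : (1 + r) * δ * ω * ω ≤ 2 * p ^ 2 := by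
    nlinarith [mul_le_mul_of_nonneg_left hδr (by positivity : (0 : ℝ) ≤ (1 + r) * ω ^ 2)]
  have hsc : -1 ≤ 2 * s * c := by nlinarith [sq_nonneg (s + c), sin_sq_add_cos_sq (ω * t)]
  have h₂₂ : 0 < p * r + 2 * (1 + r) * δ * ω * s * c := by
    nlinarith [mul_le_mul_of_nonneg_left hsc (by positivity : 0 ≤ (1 + r) * δ * ω)]
  rw [trace_lyapunovQ hp.ne']
  exact add_pos_of_nonneg_of_pos (by positivity) (div_pos h₂₂ (by positivity))

theorem det_lyapunovQ_nonneg (hp : 0 < p) (hδ : 0 ≤ δ) (hr : 1 < r)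
    (hrel : ω ^ 2 * r ^ 2 = ω ^ 2 + 4 * p ^ 2) (hδr : 2 * δ ≤ r - 1) (t : ℝ) :
    0 ≤ (lyapunovQ p ω δ ((1 + r) / p ^ 2) t).det := by
  set s := sin (ω * t)
  set c := cos (ω * t)
  have hcs : (2 * p * s - ω * (1 + r) * c) ^ 2 ≤ 2 * ω ^ 2 * r * (1 + r) := by
    nlinarith [sq_nonneg (2 * p * c + ω * (1 + r) * s), sin_sq_add_cos_sq (ω * t)]
  have hbound : δ * (2 * p * s - ω * (1 + r) * c) ^ 2 ≤ 4 * p ^ 2 * r :=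
    (mul_le_mul_of_nonneg_left hcs hδ).trans (delta_mul_max_le hr hrel hδr)
  rw [det_lyapunovQ hp.ne']
  exact mul_nonneg (by positivity) (sub_nonneg.2 hbound)

theorem det_lyapunovQ_zero_pos (hp : 0 < p) (hω : 0 < ω) (hδ : 0 < δ) (hr : 1 < r)
    (hrel : ω ^ 2 * r ^ 2 = ω ^ 2 + 4 * p ^ 2) (hδr : 2 * δ ≤ r - 1) :
    0 < (lyapunovQ p ω δ ((1 + r) / p ^ 2) 0).det := by
  have hlt : (ω * (1 + r)) ^ 2 < 2 * ω ^ 2 * r * (1 + r) := by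
    have : 0 < ω ^ 2 * (1 + r) := by positivity
    nlinarith
  have hbound : δ * (ω * (1 + r)) ^ 2 < 4 * p ^ 2 * r :=
    (mul_lt_mul_of_pos_left hlt hδ).trans_le (delta_mul_max_le hr hrel hδr)
  rw [det_lyapunovQ hp.ne', mul_zero, sin_zero, cos_zero, mul_zero, zero_sub, mul_one, neg_sq]
  exact mul_pos (by positivity) (sub_pos.2 hbound)

end Lyapunov

/-- With `η = η†` and `0 < δ ≤ δ†`, the smallest eigenvalue
`q t = λ_min (Q t) = sInf (spectrum ℝ (Q t))` is continuous, `(π/ω)`-periodic,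
nonnegative, not identically zero on `[0, π/ω]`, and hence has strictly positive
integral over one period. -/
theorem lambda_min_Q_properties
    (p₁ ω δ : ℝ) (hp₁ : 0 < p₁) (hω : 0 < ω)
    (ηd δd : ℝ)
    (hηd : ηd = (1 / p₁ ^ 2) * (1 + Real.sqrt (1 + 4 * p₁ ^ 2 / ω ^ 2)))
    (hδd : δd = (Real.sqrt (ω ^ 2 + 4 * p₁ ^ 2) - ω) / (2 * ω))
    (hδ : 0 < δ) (hδ' : δ ≤ δd)
    (A : ℝ → Matrix (Fin 2) (Fin 2) ℝ)
    (hA : ∀ t : ℝ, A t =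
      !![0, 1; -δ * ω ^ 2 * (cos (ω * t)) ^ 2, -p₁ - δ * ω * sin (2 * ω * t)])
    (P : Matrix (Fin 2) (Fin 2) ℝ) (hP : P = !![1, 1 / p₁; 1 / p₁, ηd])
    (Q : ℝ → Matrix (Fin 2) (Fin 2) ℝ)
    (hQ : ∀ t : ℝ, Q t = -((1 : ℝ) / 2) • (P * A t + (A t)ᵀ * P))
    (q : ℝ → ℝ)
    (hq : ∀ t : ℝ, q t = sInf (spectrum ℝ (Q t))) :
    Continuous q ∧ Function.Periodic q (π / ω) ∧ (∀ t : ℝ, 0 ≤ q t) ∧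
      (∃ t ∈ Set.Icc (0 : ℝ) (π / ω), q t ≠ 0) ∧
      0 < ∫ s in (0 : ℝ)..(π / ω), q s := by
  set r := √(1 + 4 * p₁ ^ 2 / ω ^ 2)
  have hsqrt : √(ω ^ 2 + 4 * p₁ ^ 2) = ω * r := sqrt_sq_add_eq_mul_sqrt hω _
  have hr : 1 < r := (lt_sqrt zero_le_one).2 (by rw [one_pow, lt_add_iff_pos_right]; positivity)
  have hrel : ω ^ 2 * r ^ 2 = ω ^ 2 + 4 * p₁ ^ 2 := by
    rw [← mul_pow, ← hsqrt, sq_sqrt (by positivity)]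
  have hδr : 2 * δ ≤ r - 1 := by
    rw [hδd, hsqrt, ← mul_sub_one, mul_comm 2 ω, mul_div_mul_left _ _ hω.ne'] at hδ'
    linarith
  have hq' : q = minEigenvalueFinTwo ∘ lyapunovQ p₁ ω δ ((1 + r) / p₁ ^ 2) := by
    funext t
    rw [hq, hQ, hA, hP, hηd, one_div_mul_eq_div, Function.comp_apply,
      ← sInf_spectrum_of_isSymm_fin_two (isSymm_lyapunovQ t)]
    rfl
  have hnonneg (t : ℝ) : 0 ≤ q t := hq' ▸
    minEigenvalueFinTwo_nonneg (trace_lyapunovQ_pos hp₁ hω hδ.le hr hrel hδr t).le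
      (det_lyapunovQ_nonneg hp₁ hδ.le hr hrel hδr t)
  have hpos : 0 < q 0 := hq' ▸
    minEigenvalueFinTwo_pos (trace_lyapunovQ_pos hp₁ hω hδ.le hr hrel hδr 0)
      (det_lyapunovQ_zero_pos hp₁ hω hδ hr hrel hδr)
  have hcont : Continuous q := hq' ▸ continuous_minEigenvalueFinTwo.comp continuous_lyapunovQ
  have hzero_mem : (0 : ℝ) ∈ Set.Icc 0 (π / ω) := ⟨le_rfl, by positivity⟩
  exact ⟨hcont, hq' ▸ (lyapunovQ_periodic hω.ne').comp _, hnonneg, ⟨0, hzero_mem, hpos.ne'⟩,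
    intervalIntegral.integral_pos (by positivity) hcont.continuousOn (fun t _ => hnonneg t)
      ⟨0, hzero_mem, hpos⟩⟩
end
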